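/- The prepotential F₀(t₀,t₁) = (1/2)·t₀²·t₁ + (1/2)·(1+t₁)²·log(1+t₁) − (1/2)·t₁ − (3/4)·t₁² is quasihomogeneous with respect to the Euler vector field E = t₀ ∂/∂t₀ + 2(1+t₁) ∂/∂t₁: for all real t₀ and all real t₁ > −1, t₀ · ∂F₀/∂t₀ (t₀,t₁) + 2·(1+t₁) · ∂F₀/∂t₁ (t₀,t₁) = 4·F₀(t₀,t₁) + t₁² + t₀². -/

import Mathlib

/-- The prepotential of the CohFT assembled from the genus-zero discrete
volumes `N_{0,s}(0,…,0) = (-1)^{s-3}(s-3)!`. -/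
noncomputable def prepotentialF₀ (t₀ t₁ : ℝ) : ℝ :=
  (1 / 2) * t₀ ^ 2 * t₁ + (1 / 2) * (1 + t₁) ^ 2 * Real.log (1 + t₁)
    - (1 / 2) * t₁ - (3 / 4) * t₁ ^ 2

/-!
Both partial derivatives are elementary: `∂₀F₀ = t₀ t₁` and, since `(x² log x)' = 2x log x + x`,
`∂₁F₀ = t₀²/2 + (1 + t₁) log (1 + t₁) - t₁`. Substituting them into `E · F₀`, the logarithmic
terms on both sides are `2 (1 + t₁)² log (1 + t₁)` and what remains is a polynomial identity.
-/

open Real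

theorem hasDerivAt_sq_mul_log {x : ℝ} (hx : x ≠ 0) :
    HasDerivAt (fun y => y ^ 2 * log y) (2 * x * log x + x) x := by
  refine ((hasDerivAt_pow 2 x).mul (hasDerivAt_log hx)).congr_deriv ?_
  field_simp
  ring

theorem hasDerivAt_prepotentialF₀_fst (t₀ t₁ : ℝ) :
    HasDerivAt (fun s => prepotentialF₀ s t₁) (t₀ * t₁) t₀ := by
  unfold prepotentialF₀
  refine (((((hasDerivAt_pow 2 t₀).const_mul (1 / 2 : ℝ)).mul_const t₁).add_const _).sub_const
    _).sub_const _ |>.congr_deriv ?_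
  push_cast
  ring

theorem hasDerivAt_prepotentialF₀_snd (t₀ : ℝ) {t₁ : ℝ} (ht₁ : 1 + t₁ ≠ 0) :
    HasDerivAt (fun s => prepotentialF₀ t₀ s)
      ((1 / 2) * t₀ ^ 2 + (1 + t₁) * log (1 + t₁) - t₁) t₁ := by
  have hlog : HasDerivAt (fun s => (1 + s) ^ 2 * log (1 + s))
      (2 * (1 + t₁) * log (1 + t₁) + (1 + t₁)) t₁ := by
    simpa using (hasDerivAt_sq_mul_log ht₁).comp_const_add 1 t₁
  unfold prepotentialF₀
  simp only [mul_assoc (1 / 2 : ℝ) ((1 + _) ^ 2)]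
  refine ((((hasDerivAt_id' t₁).const_mul ((1 / 2) * t₀ ^ 2)).fun_add
    (hlog.const_mul (1 / 2 : ℝ))).fun_sub ((hasDerivAt_id' t₁).const_mul (1 / 2 : ℝ))).fun_sub
    ((hasDerivAt_pow 2 t₁).const_mul (3 / 4 : ℝ)) |>.congr_deriv ?_
  push_cast
  ring

/-- Quasihomogeneity of the prepotential with respect to the Euler vector field
`E = t₀ ∂/∂t₀ + 2(1+t₁) ∂/∂t₁`: `E · F₀ = 4 F₀ + t₁² + t₀²` for all `t₀` and all
`t₁ > -1`. -/
theorem prepotentialF₀_quasihomogeneous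
    (t₀ t₁ : ℝ) (h : -1 < t₁) :
    t₀ * deriv (fun s => prepotentialF₀ s t₁) t₀
        + 2 * (1 + t₁) * deriv (fun s => prepotentialF₀ t₀ s) t₁ =
      4 * prepotentialF₀ t₀ t₁ + t₁ ^ 2 + t₀ ^ 2 := by
  have ht₁ : 1 + t₁ ≠ 0 := by linarith
  rw [(hasDerivAt_prepotentialF₀_fst t₀ t₁).deriv,
    (hasDerivAt_prepotentialF₀_snd t₀ ht₁).deriv, prepotentialF₀]
  ring
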